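/- (Hopf–Cole transform, backward potential.) Let d ∈ ℕ, σ > 0, f : ℝ × ℝ^d → ℝ^d continuously differentiable in x, V : ℝ × ℝ^d → ℝ differentiable in t and twice continuously differentiable in x satisfying the Hamilton–Jacobi–Bellman equation ∂_t V + ⟨f, ∇V⟩ + (σ²/2)ΔV − (σ²/2)‖∇V‖² = 0 at every (t,x), and ρ : ℝ × ℝ^d → (0,∞) differentiable in t and twice continuously differentiable in x satisfying the Fokker–Planck equation ∂_t ρ(t,x) = −∇·(ρ(t,·)·(f(t,·) − σ²∇V(t,·)))(x) + (σ²/2)·Δρ(t,x) at every (t,x). Then ψ̂ := ρ·exp(V) satisfies the second Schrödinger-system equation: for all (t,x), ∂_t ψ̂(t,x) = (σ²/2)·Δψ̂(t,x) − ∇·(ψ̂(t,·)·f(t,·))(x). -/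

import Mathlib

open scoped RealInnerProductSpace

/-- The Laplacian of `f : ℝ^d → ℝ` at `x`: trace of the second Fréchet derivative. -/
noncomputable def lap {d : ℕ} (f : EuclideanSpace ℝ (Fin d) → ℝ)
    (x : EuclideanSpace ℝ (Fin d)) : ℝ :=
  ∑ i, fderiv ℝ (fderiv ℝ f) x (EuclideanSpace.single i 1) (EuclideanSpace.single i 1)

/-- The divergence of a vector field `w : ℝ^d → ℝ^d` at `x`: trace of the Fréchet
derivative of `w` at `x`. -/
noncomputable def diverg {d : ℕ} (w : EuclideanSpace ℝ (Fin d) → EuclideanSpace ℝ (Fin d))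
    (x : EuclideanSpace ℝ (Fin d)) : ℝ :=
  ∑ i, ⟪fderiv ℝ w x (EuclideanSpace.single i 1), EuclideanSpace.single i 1⟫

/-! With `ψ̂ = ρ e^V`, the product rule gives `∂ₜψ̂ = e^V (∂ₜρ + ρ ∂ₜV)`. Since `Δ = ∇·∇`, the
Leibniz rule `∇·(g w) = ⟪∇g, w⟫ + g ∇·w` yields Leibniz rules for `Δ(ρ e^V)` and `∇·(ρ e^V f)`,
and after substituting the Fokker–Planck equation for `∂ₜρ` and the HJB equation for `∂ₜV`
both sides agree as polynomials in `ρ, e^V, ∇ρ, ∇V, Δρ, ΔV, ∇·f`. -/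

open Real InnerProductSpace

section Gradient

variable {F : Type*} [NormedAddCommGroup F] [InnerProductSpace ℝ F] [CompleteSpace F]
  {g h : F → ℝ} {g' h' x : F}

theorem HasGradientAt.mul (hg : HasGradientAt g g' x) (hh : HasGradientAt h h' x) :
    HasGradientAt (fun y => g y * h y) (g x • h' + h x • g') x := by
  rw [hasGradientAt_iff_hasFDerivAt] at *
  rw [map_add, map_smul, map_smul]
  exact hg.mul hh

theorem HasGradientAt.exp (hh : HasGradientAt h h' x) :
    HasGradientAt (fun y => exp (h y)) (exp (h x) • h') x := by
  rw [hasGradientAt_iff_hasFDerivAt] at *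
  simpa only [map_smul] using hh.exp

theorem gradient_fun_mul (hg : Differentiable ℝ g) (hh : Differentiable ℝ h) :
    gradient (fun y => g y * h y) = fun y => g y • gradient h y + h y • gradient g y :=
  gradient_eq fun y => (hg y).hasGradientAt.mul (hh y).hasGradientAt

theorem gradient_exp_comp (hh : Differentiable ℝ h) :
    gradient (fun y => exp (h y)) = fun y => exp (h y) • gradient h y :=
  gradient_eq fun y => (hh y).hasGradientAt.exp

theorem ContDiff.differentiable_gradient (hh : ContDiff ℝ 2 h) :
    Differentiable ℝ (gradient h) :=
  (toDual ℝ F).symm.differentiable.comp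
    ((hh.fderiv_right (m := 1) (by norm_num)).differentiable one_ne_zero)

end Gradient

section Divergence

variable {d : ℕ}

local notation "E" => EuclideanSpace ℝ (Fin d)

theorem lap_eq_diverg_gradient (h : E → ℝ) (x : E) : lap h x = diverg (gradient h) x := by
  have : gradient h = ⇑(toDual ℝ E).symm ∘ fderiv ℝ h := rfl
  rw [lap, diverg, this, LinearIsometryEquiv.comp_fderiv]
  exact Finset.sum_congr rfl fun i _ => toDual_symm_apply.symm

theorem diverg_smul {g : E → ℝ} {w : E → E} {x : E} (hg : DifferentiableAt ℝ g x)
    (hw : DifferentiableAt ℝ w x) :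
    diverg (fun y => g y • w y) x = ⟪gradient g x, w x⟫ + g x * diverg w x := by
  simp only [diverg, fderiv_fun_smul hg hw, add_apply, smul_apply,
    ContinuousLinearMap.smulRight_apply, inner_add_left, real_inner_smul_left,
    Finset.sum_add_distrib, ← Finset.mul_sum]
  rw [add_comm, ← (EuclideanSpace.basisFun (Fin d) ℝ).sum_inner_mul_inner (gradient g x) (w x)]
  congr 1
  refine Finset.sum_congr rfl fun i _ => ?_
  rw [EuclideanSpace.basisFun_apply, inner_gradient_left, real_inner_comm]

theorem diverg_add {w₁ w₂ : E → E} {x : E} (hw₁ : DifferentiableAt ℝ w₁ x)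
    (hw₂ : DifferentiableAt ℝ w₂ x) :
    diverg (fun y => w₁ y + w₂ y) x = diverg w₁ x + diverg w₂ x := by
  simp only [diverg, fderiv_fun_add hw₁ hw₂, add_apply, inner_add_left, Finset.sum_add_distrib]

theorem diverg_sub {w₁ w₂ : E → E} {x : E} (hw₁ : DifferentiableAt ℝ w₁ x)
    (hw₂ : DifferentiableAt ℝ w₂ x) :
    diverg (fun y => w₁ y - w₂ y) x = diverg w₁ x - diverg w₂ x := by
  simp only [diverg, fderiv_fun_sub hw₁ hw₂, sub_apply, inner_sub_left, Finset.sum_sub_distrib]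

theorem diverg_const_smul {w : E → E} {x : E} (hw : DifferentiableAt ℝ w x) (c : ℝ) :
    diverg (fun y => c • w y) x = c * diverg w x := by
  simp only [diverg, fderiv_fun_const_smul hw, smul_apply, real_inner_smul_left, Finset.mul_sum]

theorem lap_mul {g h : E → ℝ} {x : E} (hg : Differentiable ℝ g) (hh : Differentiable ℝ h)
    (hg' : DifferentiableAt ℝ (gradient g) x) (hh' : DifferentiableAt ℝ (gradient h) x) :
    lap (fun y => g y * h y) x
      = g x * lap h x + h x * lap g x + 2 * ⟪gradient g x, gradient h x⟫ := by
  rw [lap_eq_diverg_gradient, gradient_fun_mul hg hh,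
    diverg_add ((hg x).fun_smul hh') ((hh x).fun_smul hg'),
    diverg_smul (hg x) hh', diverg_smul (hh x) hg', ← lap_eq_diverg_gradient,
    ← lap_eq_diverg_gradient, real_inner_comm (gradient g x)]
  ring

theorem lap_exp_comp {h : E → ℝ} {x : E} (hh : Differentiable ℝ h)
    (hh' : DifferentiableAt ℝ (gradient h) x) :
    lap (fun y => exp (h y)) x = exp (h x) * (lap h x + ‖gradient h x‖ ^ 2) := by
  rw [lap_eq_diverg_gradient, gradient_exp_comp hh, diverg_smul (hh x).exp hh',
    gradient_exp_comp hh, real_inner_smul_left, real_inner_self_eq_norm_sq,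
    ← lap_eq_diverg_gradient]
  ring

end Divergence

theorem stmt8 {d : ℕ} (σ : ℝ)
    (f : ℝ → EuclideanSpace ℝ (Fin d) → EuclideanSpace ℝ (Fin d))
    (hf : ∀ t, ContDiff ℝ 1 (f t))
    (V : ℝ → EuclideanSpace ℝ (Fin d) → ℝ)
    (hVt : ∀ x, Differentiable ℝ fun t => V t x)
    (hVx : ∀ t, ContDiff ℝ 2 (V t))
    (hHJB : ∀ t x, deriv (fun s => V s x) t + ⟪f t x, gradient (V t) x⟫
      + σ ^ 2 / 2 * lap (V t) x - σ ^ 2 / 2 * ‖gradient (V t) x‖ ^ 2 = 0)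
    (ρ : ℝ → EuclideanSpace ℝ (Fin d) → ℝ)
    (hρt : ∀ x, Differentiable ℝ fun t => ρ t x)
    (hρx : ∀ t, ContDiff ℝ 2 (ρ t))
    (hFP : ∀ t x, deriv (fun s => ρ s x) t
      = -diverg (fun y => ρ t y • (f t y - σ ^ 2 • gradient (V t) y)) x
        + σ ^ 2 / 2 * lap (ρ t) x) :
    ∀ t x, deriv (fun s => ρ s x * Real.exp (V s x)) t
      = σ ^ 2 / 2 * lap (fun y => ρ t y * Real.exp (V t y)) x
        - diverg (fun y => (ρ t y * Real.exp (V t y)) • f t y) x := by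
  intro t x
  have hf₁ : Differentiable ℝ (f t) := (hf t).differentiable one_ne_zero
  have hρ₁ : Differentiable ℝ (ρ t) := (hρx t).differentiable two_ne_zero
  have hV₁ : Differentiable ℝ (V t) := (hVx t).differentiable two_ne_zero
  have hρ₂ := (hρx t).differentiable_gradient x
  have hV₂ := (hVx t).differentiable_gradient x
  have hexpV₂ := (hVx t).exp.differentiable_gradient x
  have hdt : deriv (fun s => ρ s x * exp (V s x)) t
      = deriv (fun s => ρ s x) t * exp (V t x)
        + ρ t x * (exp (V t x) * deriv (fun s => V s x) t) :=
    ((hρt x t).hasDerivAt.mul (hVt x t).hasDerivAt.exp).deriv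
  have hFP' := hFP t x
  rw [diverg_smul (hρ₁ x) ((hf₁ x).fun_sub (hV₂.fun_const_smul _)),
    diverg_sub (hf₁ x) (hV₂.fun_const_smul _), diverg_const_smul hV₂,
    ← lap_eq_diverg_gradient, inner_sub_right, real_inner_smul_right] at hFP'
  have hHJB' := hHJB t x
  rw [real_inner_comm] at hHJB'
  rw [hdt, lap_mul hρ₁ hV₁.exp hρ₂ hexpV₂, lap_exp_comp hV₁ hV₂,
    diverg_smul ((hρ₁.fun_mul hV₁.exp) x) (hf₁ x), gradient_fun_mul hρ₁ hV₁.exp,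
    gradient_exp_comp hV₁, inner_add_left, real_inner_smul_left, real_inner_smul_left,
    real_inner_smul_left, real_inner_smul_right]
  linear_combination exp (V t x) * hFP' + ρ t x * exp (V t x) * hHJB'
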